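/- arXiv:2104.15126 — 3 statements merged into one kernel-verified Lean document; each statement's English description precedes it below -/
import Mathlib

section
/- Fix T > 0 and R > 0. Let 𝟙_T be the indicator function of [0,T] and define 𝟙_{T,R}^{low} by 𝔉_t(𝟙_{T,R}^{low})(τ) = η(τ/R)·𝔉_t(𝟙_T)(τ), where η is a smooth cutoff equal to 1 on [-1,1] and supported in [-2,2], and set 𝟙_{T,R}^{high} = 𝟙_T - 𝟙_{T,R}^{low}. Then for every q ≥ 1, ‖𝟙_{T,R}^{high}‖_{L^q(ℝ)} ≲ min{T, R^{-1}}^{1/q}, and ‖𝟙_{T,R}^{low}‖_{L^∞(ℝ)} ≲ 1, with implicit constants independent of T, R, q. -/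
open MeasureTheory Filter
noncomputable section
def FT (u : ℝ → ℂ) : ℝ → ℂ := fun w => Fourier.fourierIntegral Real.fourierChar volume u w
def FTI (u : ℝ → ℂ) : ℝ → ℂ := fun w => Fourier.fourierIntegral Real.fourierChar volume u (-w)
def HsNorm (s : ℝ) (u : ℝ → ℂ) : ℝ :=
  Real.sqrt (∫ ξ : ℝ, (1 + ξ ^ 2) ^ s * ‖FT u ξ‖ ^ 2)
def HsNormR (s : ℝ) (u : ℝ → ℝ) : ℝ := HsNorm s (fun x => (u x : ℂ))
def MemHs (s : ℝ) (u : ℝ → ℂ) : Prop :=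
  Integrable (fun ξ : ℝ => (1 + ξ ^ 2) ^ s * ‖FT u ξ‖ ^ 2)
def MemHsR (s : ℝ) (u : ℝ → ℝ) : Prop := MemHs s (fun x => (u x : ℂ))
def besselPotential (s : ℝ) (u : ℝ → ℂ) : ℝ → ℂ :=
  FTI (fun ξ => (((1 + ξ ^ 2) ^ (s / 2) : ℝ) : ℂ) * FT u ξ)
def LinfNorm (u : ℝ → ℂ) : ℝ := (eLpNorm u ⊤ volume).toReal
def LinfNormR (u : ℝ → ℝ) : ℝ := (eLpNorm u ⊤ volume).toReal
def L2Norm (u : ℝ → ℂ) : ℝ := (eLpNorm u 2 volume).toReal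
def WsInfNorm (s : ℝ) (u : ℝ → ℝ) : ℝ :=
  LinfNorm (besselPotential s (fun x => (u x : ℂ)))
def MemWsInf (s : ℝ) (u : ℝ → ℝ) : Prop :=
  MemLp (besselPotential s (fun x => (u x : ℂ))) ⊤ volume

/-- Indicator of `[0, T]`, complex-valued. -/
def indC (T : ℝ) : ℝ → ℂ := fun t => if t ∈ Set.Icc (0 : ℝ) T then 1 else 0

/-- Low-frequency part of the indicator: the function whose time-Fourier transform is
`η(τ/R) · 𝔉(𝟙_T)(τ)`. -/
def lowPart (η : ℝ → ℝ) (T R : ℝ) : ℝ → ℂ :=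
  FTI (fun τ => ((η (τ / R) : ℝ) : ℂ) * FT (indC T) τ)

/-- High-frequency part: `𝟙_T - 𝟙_{T,R}^{low}`. -/
def highPart (η : ℝ → ℝ) (T R : ℝ) : ℝ → ℂ :=
  fun t => indC T t - lowPart η T R t

open scoped FourierTransform Real ENNReal NNReal
open Complex

namespace IndicatorHL

/-- Smooth compactly supported functions are Schwartz. -/
def mkSchwartz (f : ℝ → ℂ) (hf : ContDiff ℝ (⊤ : ℕ∞) f) (hsupp : HasCompactSupport f) :
    SchwartzMap ℝ ℂ where
  toFun := f
  smooth' := hf.of_le (by simp)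
  decay' := fun k n => by
    have h1 : HasCompactSupport (iteratedFDeriv ℝ n f) := hsupp.iteratedFDeriv n
    have h2 : HasCompactSupport (fun x : ℝ => ‖x‖ ^ k * ‖iteratedFDeriv ℝ n f x‖) :=
      h1.norm.mul_left
    obtain ⟨C, hC⟩ := ((continuous_norm.pow k).mul
      (hf.continuous_iteratedFDeriv (by exact_mod_cast le_top)).norm).bounded_above_of_compact_support h2
    exact ⟨C, fun x => (Real.le_norm_self _).trans (hC x)⟩

@[simp] lemma mkSchwartz_apply (f : ℝ → ℂ) (hf : ContDiff ℝ (⊤ : ℕ∞) f) (h2 : HasCompactSupport f)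
    (x : ℝ) : mkSchwartz f hf h2 x = f x := rfl

lemma indC_eq (T : ℝ) : indC T = (Set.Icc (0:ℝ) T).indicator (fun _ => (1:ℂ)) := by
  ext t
  by_cases h : t ∈ Set.Icc (0:ℝ) T <;> simp [indC, h]

lemma indC_norm_le (T t : ℝ) : ‖indC T t‖ ≤ 1 := by
  by_cases h : t ∈ Set.Icc (0:ℝ) T <;> simp [indC, h]

lemma indC_meas (T : ℝ) : Measurable (indC T) := by
  rw [indC_eq]
  exact measurable_const.indicator measurableSet_Icc

lemma indC_integrable (T : ℝ) : Integrable (indC T) := by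
  rw [indC_eq, integrable_indicator_iff measurableSet_Icc]
  exact integrableOn_const measure_Icc_lt_top.ne

lemma lintegral_indC (T : ℝ) (hT : 0 ≤ T) :
    ∫⁻ t, (‖indC T t‖₊ : ℝ≥0∞) = ENNReal.ofReal T := by
  have h : ∀ t, (‖indC T t‖₊ : ℝ≥0∞) = (Set.Icc (0:ℝ) T).indicator (fun _ => (1:ℝ≥0∞)) t := by
    intro t
    by_cases h : t ∈ Set.Icc (0:ℝ) T <;> simp [indC, h]
  simp_rw [h]
  rw [lintegral_indicator measurableSet_Icc]
  simp [Real.volume_Icc]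

lemma FT_eq (f : ℝ → ℂ) (w : ℝ) : FT f w = ∫ v : ℝ, (𝐞 (-(v * w)) : ℂ) * f v := by
  simp only [FT, Fourier.fourierIntegral_def]
  simp [Circle.smul_def]

lemma FTI_eq (f : ℝ → ℂ) (w : ℝ) : FTI f w = ∫ v : ℝ, (𝐞 (v * w) : ℂ) * f v := by
  simp only [FTI, Fourier.fourierIntegral_def]
  simp [Circle.smul_def, mul_neg, neg_neg]

lemma char_norm (a : ℝ) : ‖(𝐞 a : ℂ)‖ = 1 := by
  simp [Real.fourierChar_apply, Complex.norm_exp]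

lemma char_mul (a b : ℝ) : (𝐞 (a + b) : ℂ) = (𝐞 a : ℂ) * (𝐞 b : ℂ) := by
  simp [Real.fourierChar_apply, ← Complex.exp_add, mul_add]
  ring_nf

lemma char_cont : Continuous fun a : ℝ => (𝐞 a : ℂ) := by
  have h : (fun a : ℝ => (𝐞 a : ℂ)) = fun a => Complex.exp ((2 * π * a : ℝ) * Complex.I) := by
    ext a; rw [Real.fourierChar_apply]
  rw [h]
  exact Complex.continuous_exp.comp
    ((Complex.continuous_ofReal.comp (by fun_prop)).mul continuous_const)

lemma indC_sub_eq_zero {T s t : ℝ}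
    (h1 : t ∉ Set.Icc (min 0 s) (max 0 s))
    (h2 : t ∉ Set.Icc (min T (T + s)) (max T (T + s))) :
    indC T t = indC T (t - s) := by
  simp only [Set.mem_Icc, not_and_or, not_le] at h1 h2
  have key : (0 ≤ t ∧ t ≤ T) ↔ (0 ≤ t - s ∧ t - s ≤ T) := by
    rcases le_total 0 s with hs | hs
    · rw [min_eq_left hs, max_eq_right hs] at h1
      rw [min_eq_left (by linarith), max_eq_right (by linarith)] at h2
      constructor <;> rintro ⟨a, b⟩ <;> constructor <;>
        rcases h1 with h1 | h1 <;> rcases h2 with h2 | h2 <;> linarith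
    · rw [min_eq_right hs, max_eq_left hs] at h1
      rw [min_eq_right (by linarith), max_eq_left (by linarith)] at h2
      constructor <;> rintro ⟨a, b⟩ <;> constructor <;>
        rcases h1 with h1 | h1 <;> rcases h2 with h2 | h2 <;> linarith
  simp only [indC, Set.mem_Icc]
  rw [if_congr key rfl rfl]

lemma lintegral_indC_sub (T : ℝ) (hT : 0 ≤ T) (s : ℝ) :
    ∫⁻ t, (‖indC T t - indC T (t - s)‖₊ : ℝ≥0∞) ≤ ENNReal.ofReal (2 * min T |s|) := by
  rcases le_total T |s| with hc | hc
  · rw [min_eq_left hc]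
    calc ∫⁻ t, (‖indC T t - indC T (t - s)‖₊ : ℝ≥0∞)
        ≤ ∫⁻ t, ((‖indC T t‖₊ : ℝ≥0∞) + (‖indC T (t - s)‖₊ : ℝ≥0∞)) := by
          refine lintegral_mono fun t => ?_
          rw [← ENNReal.coe_add]
          exact ENNReal.coe_le_coe.2 (nnnorm_sub_le _ _)
      _ = (∫⁻ t, (‖indC T t‖₊ : ℝ≥0∞)) + ∫⁻ t, (‖indC T (t - s)‖₊ : ℝ≥0∞) :=
          lintegral_add_left ((indC_meas T).nnnorm.coe_nnreal_ennreal) _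
      _ = ENNReal.ofReal T + ENNReal.ofReal T := by
          rw [lintegral_indC T hT,
            lintegral_sub_right_eq_self (fun t => (‖indC T t‖₊ : ℝ≥0∞)) s,
            lintegral_indC T hT]
      _ ≤ ENNReal.ofReal (2 * T) := by
          rw [← ENNReal.ofReal_add hT hT]; exact ENNReal.ofReal_le_ofReal (by linarith)
  · rw [min_eq_right hc]
    set E : Set ℝ := Set.Icc (min 0 s) (max 0 s) ∪ Set.Icc (min T (T + s)) (max T (T + s)) with hE
    have hpt : ∀ t, (‖indC T t - indC T (t - s)‖₊ : ℝ≥0∞) ≤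
        E.indicator (fun _ => (1 : ℝ≥0∞)) t := by
      intro t
      by_cases ht : t ∈ E
      · rw [Set.indicator_of_mem ht]
        have hb : ‖indC T t - indC T (t - s)‖ ≤ 1 := by
          unfold indC; split_ifs <;> norm_num
        rw [← enorm_eq_nnnorm, ← ofReal_norm]
        exact (ENNReal.ofReal_le_ofReal hb).trans (by simp)
      · rw [Set.indicator_of_notMem ht]
        rw [hE, Set.mem_union, not_or] at ht
        rw [← indC_sub_eq_zero ht.1 ht.2]
        simp
    calc ∫⁻ t, (‖indC T t - indC T (t - s)‖₊ : ℝ≥0∞)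
        ≤ ∫⁻ t, E.indicator (fun _ => (1 : ℝ≥0∞)) t := lintegral_mono hpt
      _ = volume E := by
          rw [lintegral_indicator (measurableSet_Icc.union measurableSet_Icc)]
          simp [hE]
      _ ≤ volume (Set.Icc (min 0 s) (max 0 s)) +
          volume (Set.Icc (min T (T + s)) (max T (T + s))) := measure_union_le _ _
      _ ≤ ENNReal.ofReal (2 * |s|) := by
          rw [Real.volume_Icc, Real.volume_Icc, max_sub_min_eq_abs, max_sub_min_eq_abs]
          rw [← ENNReal.ofReal_add (abs_nonneg _) (abs_nonneg _)]
          apply ENNReal.ofReal_le_ofReal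
          have e1 : |s - 0| = |s| := by rw [sub_zero]
          have e2 : |T + s - T| = |s| := by rw [add_sub_cancel_left]
          rw [e1, e2]; linarith

lemma FTI_comp_div (f : ℝ → ℂ) (R y : ℝ) (hR : 0 < R) :
    (∫ τ : ℝ, (𝐞 (τ * y) : ℂ) * f (τ / R)) = (R : ℂ) * FTI f (R * y) := by
  have key : ∀ τ : ℝ, (𝐞 (τ * y) : ℂ) * f (τ / R)
      = (fun σ : ℝ => (𝐞 (σ * (R * y)) : ℂ) * f σ) (τ / R) := by
    intro τ
    have harg : (τ / R) * (R * y) = τ * y := by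
      field_simp
    simp only [harg]
  simp_rw [key]
  rw [MeasureTheory.Measure.integral_comp_div (fun σ : ℝ => (𝐞 (σ * (R * y)) : ℂ) * f σ) R]
  rw [FTI_eq, abs_of_pos hR]
  rw [Complex.real_smul]

lemma integrable_scale {F : Type*} [NormedAddCommGroup F] (φ : ℝ → F) (hφ : Integrable φ)
    (R : ℝ) (hR : R ≠ 0) : Integrable fun s : ℝ => φ (R * s) := by
  have h := (integrable_comp_smul_iff volume φ hR).2 hφ
  simpa [smul_eq_mul] using h

lemma integral_scale_mul (φ : ℝ → ℝ) (R : ℝ) (hR : 0 < R) :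
    (∫ s : ℝ, R * φ (R * s)) = ∫ x : ℝ, φ x := by
  rw [MeasureTheory.integral_const_mul]
  rw [MeasureTheory.Measure.integral_comp_mul_left φ R]
  rw [abs_inv, abs_of_pos hR, smul_eq_mul]
  field_simp

end IndicatorHL


set_option maxHeartbeats 1000000 in
open IndicatorHL in
/-- Bounds on the high/low frequency decomposition of the indicator of `[0,T]`:
`‖𝟙_{T,R}^{high}‖_{L^q} ≲ min{T, R⁻¹}^{1/q}` and `‖𝟙_{T,R}^{low}‖_{L^∞} ≲ 1`,
uniformly in `T`, `R`, `q`. -/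
theorem indicator_high_low_bounds (η : ℝ → ℝ) (hη : ContDiff ℝ (⊤ : ℕ∞) η)
    (hη01 : ∀ x, 0 ≤ η x ∧ η x ≤ 1) (hη1 : ∀ x ∈ Set.Icc (-1 : ℝ) 1, η x = 1)
    (hηsupp : Function.support η ⊆ Set.Icc (-2 : ℝ) 2) :
    ∃ C > 0, ∀ T > (0 : ℝ), ∀ R > (0 : ℝ), ∀ q : ℝ, 1 ≤ q →
      eLpNorm (highPart η T R) (ENNReal.ofReal q) volume ≤
        ENNReal.ofReal (C * (min T R⁻¹) ^ (1 / q)) ∧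
      eLpNorm (lowPart η T R) ⊤ volume ≤ ENNReal.ofReal C := by
  classical
  set ηc : ℝ → ℂ := fun x => (η x : ℂ) with hηcdef
  have hηcC : ContDiff ℝ (⊤ : ℕ∞) ηc := Complex.ofRealCLM.contDiff.comp hη
  have hηzero : ∀ x : ℝ, x ∉ Set.Icc (-2 : ℝ) 2 → η x = 0 := by
    intro x hx
    by_contra h
    exact hx (hηsupp h)
  have hηsuppC : HasCompactSupport ηc := by
    apply HasCompactSupport.intro (isCompact_Icc (a := (-2 : ℝ)) (b := 2))
    intro x hx
    simp [hηcdef, hηzero x hx]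
  set ηS : SchwartzMap ℝ ℂ := mkSchwartz ηc hηcC hηsuppC with hηS
  set gS : SchwartzMap ℝ ℂ := (FourierTransform.fourierCLE ℂ (SchwartzMap ℝ ℂ)).symm ηS with hgS
  set g : ℝ → ℂ := ⇑gS with hgdef
  have hgcont : Continuous g := gS.continuous
  have hgint : Integrable g := gS.integrable
  have hgnormint : Integrable fun x : ℝ => ‖g x‖ := hgint.norm
  have hgint1 : Integrable fun x : ℝ => |x| * ‖g x‖ := by
    have h := gS.integrable_pow_mul volume 1
    simpa [Real.norm_eq_abs] using h
  have hφint : Integrable fun x : ℝ => ‖g x‖ * (1 + |x|) := by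
    have hfeq : (fun x : ℝ => ‖g x‖ * (1 + |x|)) = fun x => ‖g x‖ + |x| * ‖g x‖ := by
      funext x; ring
    rw [hfeq]
    exact hgnormint.add hgint1
  set A0 : ℝ := ∫ x : ℝ, ‖g x‖ * (1 + |x|) with hA0def
  have hA0nonneg : 0 ≤ A0 := integral_nonneg fun x => by positivity
  have hIK : (∫ x : ℝ, ‖g x‖) ≤ A0 := by
    refine integral_mono hgnormint hφint fun x => ?_
    nlinarith [abs_nonneg x, norm_nonneg (g x)]
  have hFTg : FT g = ηc := by
    have h1 : (FourierTransform.fourierCLE ℂ (SchwartzMap ℝ ℂ)) gS = ηS :=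
      (FourierTransform.fourierCLE ℂ (SchwartzMap ℝ ℂ)).apply_symm_apply ηS
    have h2 : (⇑((FourierTransform.fourierCLE ℂ (SchwartzMap ℝ ℂ)) gS) : ℝ → ℂ) = ηc := by rw [h1]; rfl
    rw [← h2, SchwartzMap.fourierTransformCLE_apply]
    ext w; simp only [SchwartzMap.fourier_coe, Real.fourier_real_eq, FT, Fourier.fourierIntegral_def]
    rfl
  have hg0 : (∫ x : ℝ, g x) = 1 := by
    have h0 : FT g 0 = ∫ x : ℝ, g x := by
      rw [FT_eq]; simp
    rw [← h0, hFTg]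
    simp [hηcdef, hη1 0 (by norm_num)]
  set M : ℝ := 1 + A0 with hMdef
  have hM1 : 1 ≤ M := by linarith
  have hMpos : 0 < M := by linarith
  refine ⟨2 * M, by linarith, ?_⟩
  intro T hT R hR q hq
  -- the rescaled kernel
  set K : ℝ → ℂ := fun x => (R : ℂ) * g (R * x) with hKdef
  have hKcont : Continuous K := continuous_const.mul (hgcont.comp (continuous_const.mul continuous_id))
  have hKint : Integrable K :=
    ((integrable_scale g hgint R hR.ne').const_mul _)
  have hKnorm : ∀ x : ℝ, ‖K x‖ = R * ‖g (R * x)‖ := by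
    intro x
    rw [norm_mul, Complex.norm_real, Real.norm_eq_abs, abs_of_pos hR]
  have hintK : (∫ x : ℝ, K x) = 1 := by
    rw [hKdef]
    rw [MeasureTheory.integral_const_mul]
    rw [MeasureTheory.Measure.integral_comp_mul_left g R]
    rw [abs_inv, abs_of_pos hR, hg0]
    rw [Complex.real_smul, mul_one, ← Complex.ofReal_mul,
      mul_inv_cancel₀ hR.ne', Complex.ofReal_one]
  -- the rescaled cutoff
  set ηR : ℝ → ℂ := fun τ => ηc (τ / R) with hηRdef
  have hηRcont : Continuous ηR := hηcC.continuous.comp (continuous_id.div_const R)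
  have hηRsupp : HasCompactSupport ηR := by
    apply HasCompactSupport.intro (isCompact_Icc (a := (-(2*R) : ℝ)) (b := 2*R))
    intro x hx
    have hmem : x / R ∉ Set.Icc (-2 : ℝ) 2 := by
      simp only [Set.mem_Icc, not_and_or, not_le] at hx ⊢
      rcases hx with hx | hx
      · left; rw [div_lt_iff₀ hR]; nlinarith
      · right; rw [lt_div_iff₀ hR]; nlinarith
    simp [hηRdef, hηcdef, hηzero _ hmem]
  have hηRint : Integrable ηR := hηRcont.integrable_of_hasCompactSupport hηRsupp
  -- kernel identity
  have hker : ∀ y : ℝ, (∫ τ : ℝ, (𝐞 (τ * y) : ℂ) * ηR τ) = K y := by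
    intro y
    have h := FTI_comp_div ηc R y hR
    rw [hηRdef]
    rw [h, hKdef]
    congr 1
    have : FTI ηc = g := by
      rw [hgdef, hgS]
      rw [SchwartzMap.fourierTransformCLE_symm_apply]
      ext w; simp only [SchwartzMap.fourierInv_coe, Real.fourierInv_eq_fourier_neg, Real.fourier_real_eq, FTI, Fourier.fourierIntegral_def]
      rfl
    rw [this]
  -- convolution representation of the low part
  have low_rep : ∀ t : ℝ, lowPart η T R t = ∫ u : ℝ, indC T u * K (t - u) := by
    intro t
    have hΦmeas : AEStronglyMeasurable (fun p : ℝ × ℝ =>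
        (𝐞 (p.1 * t) : ℂ) * ηR p.1 * ((𝐞 (-(p.2 * p.1)) : ℂ) * indC T p.2))
        (volume.prod volume) := by
      apply Measurable.aestronglyMeasurable
      exact ((char_cont.measurable.comp (measurable_fst.mul measurable_const)).mul
        (hηRcont.measurable.comp measurable_fst)).mul
        ((char_cont.measurable.comp (measurable_snd.mul measurable_fst).neg).mul
        ((indC_meas T).comp measurable_snd))
    have hΦint : Integrable (fun p : ℝ × ℝ =>
        (𝐞 (p.1 * t) : ℂ) * ηR p.1 * ((𝐞 (-(p.2 * p.1)) : ℂ) * indC T p.2))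
        (volume.prod volume) := by
      have hb : Integrable (fun p : ℝ × ℝ => ‖ηR p.1‖ * ‖indC T p.2‖) (volume.prod volume) :=
        hηRint.norm.mul_prod (indC_integrable T).norm
      refine hb.mono' hΦmeas (ae_of_all _ fun p => ?_)
      simp only [norm_mul, char_norm, one_mul]
      exact le_of_eq (by ring)
    calc lowPart η T R t
        = ∫ τ : ℝ, (𝐞 (τ * t) : ℂ) * (ηR τ * FT (indC T) τ) :=
          FTI_eq (fun τ => ηR τ * FT (indC T) τ) t
      _ = ∫ τ : ℝ, ∫ u : ℝ, (𝐞 (τ * t) : ℂ) * ηR τ * ((𝐞 (-(u * τ)) : ℂ) * indC T u) := by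
          congr 1; funext τ
          rw [FT_eq, ← mul_assoc, ← MeasureTheory.integral_const_mul]
      _ = ∫ u : ℝ, ∫ τ : ℝ, (𝐞 (τ * t) : ℂ) * ηR τ * ((𝐞 (-(u * τ)) : ℂ) * indC T u) :=
          MeasureTheory.integral_integral_swap hΦint
      _ = ∫ u : ℝ, indC T u * K (t - u) := by
          congr 1; funext u
          have hchar : ∀ τ : ℝ, (𝐞 (τ * t) : ℂ) * ηR τ * ((𝐞 (-(u * τ)) : ℂ) * indC T u)
              = indC T u * ((𝐞 (τ * (t - u)) : ℂ) * ηR τ) := by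
            intro τ
            have h1 : (𝐞 (τ * t) : ℂ) * (𝐞 (-(u * τ)) : ℂ) = (𝐞 (τ * (t - u)) : ℂ) := by
              rw [← char_mul, show τ * t + -(u * τ) = τ * (t - u) by ring]
            calc (𝐞 (τ * t) : ℂ) * ηR τ * ((𝐞 (-(u * τ)) : ℂ) * indC T u)
                = (𝐞 (τ * t) : ℂ) * (𝐞 (-(u * τ)) : ℂ) * ηR τ * indC T u := by ring
              _ = indC T u * ((𝐞 (τ * (t - u)) : ℂ) * ηR τ) := by rw [h1]; ring
          simp_rw [hchar]
          rw [MeasureTheory.integral_const_mul, hker (t - u)]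
  -- shifted representation
  have hshift : ∀ t : ℝ, Integrable fun s : ℝ => indC T (t - s) * K s := by
    intro t
    refine hKint.norm.mono' ?_ (ae_of_all _ fun s => ?_)
    · exact (((indC_meas T).comp (measurable_const.sub measurable_id)).mul
        hKcont.measurable).aestronglyMeasurable
    · rw [norm_mul]
      exact mul_le_of_le_one_left (norm_nonneg _) (indC_norm_le T _)
  have low_rep2 : ∀ t : ℝ, lowPart η T R t = ∫ s : ℝ, indC T (t - s) * K s := by
    intro t
    rw [low_rep t, ← MeasureTheory.integral_sub_left_eq_self
      (fun u : ℝ => indC T u * K (t - u)) volume t]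
    congr 1; funext s
    rw [sub_sub_cancel]
  have high_rep : ∀ t : ℝ, highPart η T R t = ∫ s : ℝ, (indC T t - indC T (t - s)) * K s := by
    intro t
    have h1 : highPart η T R t = indC T t - lowPart η T R t := rfl
    have h2 : indC T t = ∫ s : ℝ, indC T t * K s := by
      rw [MeasureTheory.integral_const_mul, hintK, mul_one]
    rw [h1, low_rep2 t]
    conv_lhs => rw [h2]
    rw [← MeasureTheory.integral_sub (hKint.const_mul _) (hshift t)]
    congr 1; funext s; ring
  -- L∞ bound on the low part
  have low_bound : ∀ t : ℝ, ‖lowPart η T R t‖ ≤ A0 := by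
    intro t
    rw [low_rep2 t]
    calc ‖∫ s : ℝ, indC T (t - s) * K s‖ ≤ ∫ s : ℝ, ‖K s‖ := by
          refine norm_integral_le_of_norm_le hKint.norm (ae_of_all _ fun s => ?_)
          rw [norm_mul]
          exact mul_le_of_le_one_left (norm_nonneg _) (indC_norm_le T _)
      _ = ∫ x : ℝ, ‖g x‖ := by
          calc (∫ s : ℝ, ‖K s‖) = ∫ s : ℝ, R * ‖g (R * s)‖ := by
                congr 1; funext s; exact hKnorm s
            _ = ∫ x : ℝ, ‖g x‖ := integral_scale_mul (fun x => ‖g x‖) R hR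
      _ ≤ A0 := hIK
  -- L∞ bound on the high part
  have high_bound : ∀ t : ℝ, ‖highPart η T R t‖ ≤ M := by
    intro t
    have h1 : highPart η T R t = indC T t - lowPart η T R t := rfl
    rw [h1, hMdef]
    exact (norm_sub_le _ _).trans (add_le_add (indC_norm_le T t) (low_bound t))
  -- L1 bound on the high part
  set m : ℝ := min T R⁻¹ with hmdef
  have hm0 : 0 < m := lt_min hT (inv_pos.2 hR)
  have hkeyineq : ∀ s : ℝ, 2 * min T |s| ≤ 2 * m * (1 + R * |s|) := by
    intro s
    have hRinv : R⁻¹ * R = 1 := inv_mul_cancel₀ hR.ne'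
    rcases le_total T R⁻¹ with h | h
    · have hmeq : m = T := min_eq_left h
      rw [hmeq]
      have h1 : min T |s| ≤ T := min_le_left _ _
      nlinarith [abs_nonneg s, hT.le, mul_nonneg hR.le (abs_nonneg s),
        mul_nonneg hT.le (mul_nonneg hR.le (abs_nonneg s))]
    · have hmeq : m = R⁻¹ := min_eq_right h
      rw [hmeq]
      have h1 : min T |s| ≤ |s| := min_le_right _ _
      have h2 : R⁻¹ * (R * |s|) = |s| := by rw [← mul_assoc, hRinv, one_mul]
      nlinarith [inv_pos.2 hR]
  have hweight : (∫ s : ℝ, (1 + R * |s|) * ‖K s‖) = A0 := by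
    have heq : (fun s : ℝ => (1 + R * |s|) * ‖K s‖)
        = fun s : ℝ => R * ((fun x : ℝ => ‖g x‖ * (1 + |x|)) (R * s)) := by
      funext s
      rw [hKnorm s]
      simp only [abs_mul, abs_of_pos hR]
      ring
    rw [heq]
    exact integral_scale_mul (fun x : ℝ => ‖g x‖ * (1 + |x|)) R hR
  have hweightint : Integrable fun s : ℝ => (1 + R * |s|) * ‖K s‖ := by
    have heq : (fun s : ℝ => (1 + R * |s|) * ‖K s‖)
        = fun s : ℝ => R * ((fun x : ℝ => ‖g x‖ * (1 + |x|)) (R * s)) := by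
      funext s
      rw [hKnorm s]
      simp only [abs_mul, abs_of_pos hR]
      ring
    rw [heq]
    exact (integrable_scale _ hφint R hR.ne').const_mul _
  have hI1 : (∫⁻ t : ℝ, (‖highPart η T R t‖₊ : ℝ≥0∞)) ≤ ENNReal.ofReal (2 * m * A0) := by
    have hmeasprod : AEMeasurable (Function.uncurry fun t s : ℝ =>
        (‖(indC T t - indC T (t - s)) * K s‖₊ : ℝ≥0∞)) (volume.prod volume) := by
      apply Measurable.aemeasurable
      exact ((((indC_meas T).comp measurable_fst).sub
        ((indC_meas T).comp (measurable_fst.sub measurable_snd))).mul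
        (hKcont.measurable.comp measurable_snd)).enorm
    calc (∫⁻ t : ℝ, (‖highPart η T R t‖₊ : ℝ≥0∞))
        ≤ ∫⁻ t : ℝ, ∫⁻ s : ℝ, (‖(indC T t - indC T (t - s)) * K s‖₊ : ℝ≥0∞) := by
          refine lintegral_mono fun t => ?_
          rw [high_rep t]
          exact enorm_integral_le_lintegral_enorm _
      _ = ∫⁻ s : ℝ, ∫⁻ t : ℝ, (‖(indC T t - indC T (t - s)) * K s‖₊ : ℝ≥0∞) :=
          lintegral_lintegral_swap hmeasprod
      _ ≤ ∫⁻ s : ℝ, ENNReal.ofReal (2 * m * (1 + R * |s|)) * (‖K s‖₊ : ℝ≥0∞) := by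
          refine lintegral_mono fun s => ?_
          have hstep : (∫⁻ t : ℝ, (‖(indC T t - indC T (t - s)) * K s‖₊ : ℝ≥0∞))
              = (∫⁻ t : ℝ, (‖indC T t - indC T (t - s)‖₊ : ℝ≥0∞)) * (‖K s‖₊ : ℝ≥0∞) := by
            simp_rw [nnnorm_mul, ENNReal.coe_mul]
            exact lintegral_mul_const _ (((indC_meas T).sub
              ((indC_meas T).comp (measurable_id.sub measurable_const))).enorm)
          rw [hstep]
          refine mul_le_mul_left ?_ _
          exact (lintegral_indC_sub T hT.le s).trans
            (ENNReal.ofReal_le_ofReal (hkeyineq s))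
      _ = ∫⁻ s : ℝ, ENNReal.ofReal (2 * m) * (ENNReal.ofReal ((1 + R * |s|) * ‖K s‖)) := by
          congr 1; funext s
          rw [← enorm_eq_nnnorm, ← ofReal_norm,
            ENNReal.ofReal_mul (by positivity : (0:ℝ) ≤ 2 * m),
            ENNReal.ofReal_mul (by positivity : (0:ℝ) ≤ 1 + R * |s|)]
          ring
      _ = ENNReal.ofReal (2 * m) * ∫⁻ s : ℝ, ENNReal.ofReal ((1 + R * |s|) * ‖K s‖) :=
          lintegral_const_mul' _ _ ENNReal.ofReal_ne_top
      _ = ENNReal.ofReal (2 * m) * ENNReal.ofReal (∫ s : ℝ, (1 + R * |s|) * ‖K s‖) := by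
          rw [ofReal_integral_eq_lintegral_ofReal hweightint
            (ae_of_all _ fun s => by positivity)]
      _ = ENNReal.ofReal (2 * m * A0) := by
          rw [hweight, ← ENNReal.ofReal_mul (by positivity)]
  constructor
  · -- L^q bound on the high part
    have hq0 : (0:ℝ) < q := lt_of_lt_of_le one_pos hq
    have hp0 : ENNReal.ofReal q ≠ 0 := by
      rw [Ne, ENNReal.ofReal_eq_zero, not_le]; exact hq0
    rw [eLpNorm_eq_lintegral_rpow_enorm_toReal hp0 ENNReal.ofReal_ne_top,
      ENNReal.toReal_ofReal hq0.le]
    have hpt : ∀ t : ℝ, (‖highPart η T R t‖₊ : ℝ≥0∞) ^ q ≤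
        ENNReal.ofReal (M ^ (q - 1)) * (‖highPart η T R t‖₊ : ℝ≥0∞) := by
      intro t
      set x : ℝ≥0∞ := (‖highPart η T R t‖₊ : ℝ≥0∞) with hx
      have hxM : x ≤ ENNReal.ofReal M := by
        rw [hx, ← enorm_eq_nnnorm, ← ofReal_norm]
        exact ENNReal.ofReal_le_ofReal (high_bound t)
      rcases eq_or_ne x 0 with h0 | h0
      · rw [h0, ENNReal.zero_rpow_of_pos hq0]
        exact zero_le
      · have hxt : x ≠ ⊤ := ENNReal.coe_ne_top
        have hsplit : x ^ q = x ^ (q - 1) * x ^ (1:ℝ) := by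
          rw [← ENNReal.rpow_add _ _ h0 hxt, sub_add_cancel]
        rw [hsplit, ENNReal.rpow_one]
        refine mul_le_mul_left ?_ _
        calc x ^ (q - 1) ≤ (ENNReal.ofReal M) ^ (q - 1) :=
              ENNReal.rpow_le_rpow hxM (by linarith)
          _ = ENNReal.ofReal (M ^ (q - 1)) := ENNReal.ofReal_rpow_of_pos hMpos
    have hmain : (∫⁻ t : ℝ, (‖highPart η T R t‖₊ : ℝ≥0∞) ^ q) ≤
        ENNReal.ofReal ((2 * M) ^ q * m) := by
      have h1 : M ^ (q - 1) ≤ (2 * M) ^ (q - 1) :=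
        Real.rpow_le_rpow hMpos.le (by linarith) (by linarith)
      have h2 : (2 * M) ^ q = (2 * M) ^ (q - 1) * (2 * M) := by
        conv_lhs => rw [show q = (q - 1) + 1 by ring]
        rw [Real.rpow_add_one (by positivity : (2 * M) ≠ 0)]
      calc (∫⁻ t : ℝ, (‖highPart η T R t‖₊ : ℝ≥0∞) ^ q)
          ≤ ∫⁻ t : ℝ, ENNReal.ofReal (M ^ (q - 1)) * (‖highPart η T R t‖₊ : ℝ≥0∞) :=
            lintegral_mono hpt
        _ = ENNReal.ofReal (M ^ (q - 1)) * ∫⁻ t : ℝ, (‖highPart η T R t‖₊ : ℝ≥0∞) :=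
            lintegral_const_mul' _ _ ENNReal.ofReal_ne_top
        _ ≤ ENNReal.ofReal (M ^ (q - 1)) * ENNReal.ofReal (2 * m * A0) :=
            mul_le_mul_right hI1 _
        _ ≤ ENNReal.ofReal ((2 * M) ^ q * m) := by
            rw [← ENNReal.ofReal_mul (by positivity)]
            apply ENNReal.ofReal_le_ofReal
            have hA0M : A0 ≤ M := by rw [hMdef]; linarith
            have e1 : M ^ (q - 1) * (2 * m * A0) ≤ M ^ (q - 1) * (2 * m * M) := by
              refine mul_le_mul_of_nonneg_left ?_ (Real.rpow_nonneg hMpos.le _)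
              nlinarith [hm0.le]
            have e2 : M ^ (q - 1) * (2 * m * M) ≤ (2 * M) ^ (q - 1) * (2 * m * M) := by
              refine mul_le_mul_of_nonneg_right h1 (by positivity)
            have e3 : (2 * M) ^ (q - 1) * (2 * m * M) = (2 * M) ^ q * m := by
              rw [h2]; ring
            linarith
    calc (∫⁻ t : ℝ, (‖highPart η T R t‖₊ : ℝ≥0∞) ^ q) ^ (1 / q)
        ≤ (ENNReal.ofReal ((2 * M) ^ q * m)) ^ (1 / q) :=
          ENNReal.rpow_le_rpow hmain (by positivity)
      _ = ENNReal.ofReal (((2 * M) ^ q * m) ^ (1 / q)) :=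
          ENNReal.ofReal_rpow_of_pos (by positivity)
      _ = ENNReal.ofReal (2 * M * m ^ (1 / q)) := by
          congr 1
          rw [Real.mul_rpow (by positivity) hm0.le]
          congr 1
          rw [← Real.rpow_mul (by positivity : (0:ℝ) ≤ 2 * M),
            mul_one_div_cancel hq0.ne', Real.rpow_one]
  · -- L^∞ bound on the low part
    rw [eLpNorm_exponent_top]
    refine (eLpNormEssSup_le_of_ae_bound (C := A0) (ae_of_all _ low_bound)).trans ?_
    exact ENNReal.ofReal_le_ofReal (by linarith)
end
end

section
/- Let ξ_1, …, ξ_{k+1} ∈ ℝ with ξ_1 + ⋯ + ξ_{k+1} = 0, and suppose |ξ_i| ∼ N_i with N_1 ≥ N_2 ≥ N_3 ≥ N_4 = max{N_4,…,N_{k+1}} and N_3 ≥ 2^9 k³ N_4. Then the resonance function Ω_k(ξ_1,…,ξ_{k+1}) = ξ_1³ + ⋯ + ξ_{k+1}³ satisfies |Ω_k| ∼ N_1 N_2 N_3; more precisely Ω_k = 3 ξ_1 ξ_2 ξ_3 + O(N_1² N_4), and there exist absolute constants c, C > 0 (depending only on k polynomially) with c N_1N_2N_3 ≤ |Ω_k|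 ≤ C N_1N_2N_3. -/
/-!
Split off the three dominant frequencies `a, b, c` and write `t, s` for the sum and the sum of
cubes of the remaining ones. Since `a + b + c = -t`, the factorisation
`a³ + b³ + c³ - 3abc = (a + b + c)(a² + b² + c² - ab - bc - ca)` gives
`Ω - 3abc = -t · O(N₀²) + s = O(k N₀² N₃)`. The same relation `a = -(b + c + t)` shows
`N₀ ≲ k N₁`, so the error is `O(k² N₀ N₁ N₃)`, which the gap `N₂ ≥ 2⁹ k³ N₃` makes at most a
quarter of `N₀ N₁ N₂`, while `|3abc|` lies between `3/8` and `24` times `N₀ N₁ N₂`.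
-/

open Finset

theorem Fin.sum_univ_eq_add_add_add_sum {M : Type*} [AddCommMonoid M] {n : ℕ}
    (f : Fin (n + 3) → M) : ∑ i, f i = f 0 + f 1 + f 2 + ∑ i : Fin n, f (i.addNat 3) := by
  rw [Fin.sum_univ_succ, Fin.sum_univ_succ, Fin.sum_univ_succ]
  simp only [Fin.succ_zero_eq_one, Fin.succ_one_eq_two, add_assoc]
  rfl

section OrderedRing

variable {R : Type*} [CommRing R] [LinearOrder R] [IsStrictOrderedRing R]

theorem abs_sum_le_card_mul {ι : Type*} [Fintype ι] {f : ι → R} {M : R}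
    (h : ∀ i, |f i| ≤ M) : |∑ i, f i| ≤ Fintype.card ι * M :=
  calc |∑ i, f i| ≤ ∑ i, |f i| := abs_sum_le_sum_abs _ _
    _ ≤ ∑ _i : ι, M := sum_le_sum fun i _ => h i
    _ = Fintype.card ι * M := by simp

theorem abs_sq_add_sq_add_sq_sub_le {a b c M : R} (ha : |a| ≤ M) (hb : |b| ≤ M) (hc : |c| ≤ M) :
    |a ^ 2 + b ^ 2 + c ^ 2 - a * b - b * c - c * a| ≤ 6 * M ^ 2 := by
  have ha2 : a ^ 2 ≤ M ^ 2 := sq_le_sq' (abs_le.mp ha).1 (abs_le.mp ha).2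
  have hb2 : b ^ 2 ≤ M ^ 2 := sq_le_sq' (abs_le.mp hb).1 (abs_le.mp hb).2
  have hc2 : c ^ 2 ≤ M ^ 2 := sq_le_sq' (abs_le.mp hc).1 (abs_le.mp hc).2
  rw [abs_le]
  constructor <;> nlinarith [sq_nonneg (a - b), sq_nonneg (b - c), sq_nonneg (c - a),
    sq_nonneg (a + b), sq_nonneg (b + c), sq_nonneg (c + a)]

theorem abs_cube_add_sub_three_mul_le {a b c t s M τ σ : R} (h : a + b + c + t = 0)
    (ha : |a| ≤ M) (hb : |b| ≤ M) (hc : |c| ≤ M) (ht : |t| ≤ τ) (hs : |s| ≤ σ) :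
    |a ^ 3 + b ^ 3 + c ^ 3 + s - 3 * (a * b * c)| ≤ 6 * M ^ 2 * τ + σ := by
  have hfactor : a ^ 3 + b ^ 3 + c ^ 3 + s - 3 * (a * b * c) =
      -t * (a ^ 2 + b ^ 2 + c ^ 2 - a * b - b * c - c * a) + s := by
    rw [show t = -(a + b + c) by linarith]
    ring
  have hQ := abs_sq_add_sq_add_sq_sub_le ha hb hc
  rw [hfactor]
  calc _ ≤ |t| * |a ^ 2 + b ^ 2 + c ^ 2 - a * b - b * c - c * a| + |s| := by
        rw [← abs_neg t, ← abs_mul]; exact abs_add_le _ _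
    _ ≤ τ * (6 * M ^ 2) + σ := by gcongr; exact (abs_nonneg t).trans ht
    _ = 6 * M ^ 2 * τ + σ := by ring

end OrderedRing

theorem resonance_bounds_of_three_dominant {K : Type*} [Field K] [LinearOrder K]
    [IsStrictOrderedRing K] {a b c t s N₀ N₁ N₂ N₃ k : K} (hk : 3 ≤ k)
    (hsum : a + b + c + t = 0) (ha : N₀ / 2 ≤ |a| ∧ |a| ≤ 2 * N₀)
    (hb : N₁ / 2 ≤ |b| ∧ |b| ≤ 2 * N₁) (hc : N₂ / 2 ≤ |c| ∧ |c| ≤ 2 * N₂)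
    (h₁₀ : N₁ ≤ N₀) (h₂₁ : N₂ ≤ N₁) (h₃₂ : N₃ ≤ N₂) (hN₃ : 0 ≤ N₃)
    (ht : |t| ≤ 2 * k * N₃) (hs : |s| ≤ 8 * k * N₃ ^ 3) (hgap : 2 ^ 9 * k ^ 3 * N₃ ≤ N₂) :
    1 / 8 * (N₀ * N₁ * N₂) ≤ |a ^ 3 + b ^ 3 + c ^ 3 + s| ∧
      |a ^ 3 + b ^ 3 + c ^ 3 + s| ≤ 56 * k * (N₀ * N₁ * N₂) ∧
      |a ^ 3 + b ^ 3 + c ^ 3 + s - 3 * (a * b * c)| ≤ 56 * k * N₀ ^ 2 * N₃ := by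
  have hk₀ : 0 ≤ k := by linarith
  have hN₂ : 0 ≤ N₂ := hN₃.trans h₃₂
  have hN₁ : 0 ≤ N₁ := hN₂.trans h₂₁
  have hN₀ : 0 ≤ N₀ := hN₁.trans h₁₀
  have herr : |a ^ 3 + b ^ 3 + c ^ 3 + s - 3 * (a * b * c)| ≤ 56 * k * N₀ ^ 2 * N₃ := by
    refine (abs_cube_add_sub_three_mul_le hsum ha.2 (hb.2.trans (by linarith))
      (hc.2.trans (by linarith)) ht hs).trans ?_
    have : N₃ ^ 2 ≤ N₀ ^ 2 := by gcongr; linarith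
    nlinarith [mul_le_mul_of_nonneg_left this (mul_nonneg hk₀ hN₃)]
  have hN₀₁ : N₀ ≤ (4 * k + 8) * N₁ := by
    have : |a| ≤ |b| + |c| + |t| := by
      rw [show a = -(b + c + t) by linarith, abs_neg]
      exact (abs_add_le _ _).trans (by gcongr; exact abs_add_le _ _)
    nlinarith
  have hsmall : 56 * k * N₀ ^ 2 * N₃ ≤ 1 / 4 * (N₀ * N₁ * N₂) := by
    have hcoef : 56 * k * (4 * k + 8) ≤ 2 ^ 7 * k ^ 3 := by
      nlinarith [mul_nonneg hk₀ (sq_nonneg (k - 3)), mul_nonneg hk₀ (sub_nonneg.mpr hk)]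
    calc 56 * k * N₀ ^ 2 * N₃ ≤ 56 * k * (4 * k + 8) * (N₀ * N₁ * N₃) := by
          have := mul_le_mul_of_nonneg_left hN₀₁ (by positivity : 0 ≤ 56 * k * N₀ * N₃)
          linarith
      _ ≤ 2 ^ 7 * k ^ 3 * (N₀ * N₁ * N₃) := by gcongr
      _ ≤ 1 / 4 * (N₀ * N₁ * N₂) := by
          have := mul_le_mul_of_nonneg_left hgap (mul_nonneg hN₀ hN₁)
          linarith
  have hmain : 3 / 8 * (N₀ * N₁ * N₂) ≤ |3 * (a * b * c)| ∧
      |3 * (a * b * c)| ≤ 24 * (N₀ * N₁ * N₂) := by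
    simp only [abs_mul, Nat.abs_ofNat]
    constructor
    · have := mul_le_mul (mul_le_mul ha.1 hb.1 (by positivity) (abs_nonneg a)) hc.1
        (by positivity) (by positivity)
      linarith
    · have := mul_le_mul (mul_le_mul ha.2 hb.2 (abs_nonneg b) (by positivity)) hc.2
        (abs_nonneg c) (by positivity)
      linarith
  have hlower := abs_sub_abs_le_abs_sub (3 * (a * b * c)) (a ^ 3 + b ^ 3 + c ^ 3 + s)
  have hupper := abs_sub_abs_le_abs_sub (a ^ 3 + b ^ 3 + c ^ 3 + s) (3 * (a * b * c))
  rw [abs_sub_comm] at hlower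
  have hC : (24 + 1 / 4) * (N₀ * N₁ * N₂) ≤ 56 * k * (N₀ * N₁ * N₂) := by
    gcongr; linarith
  exact ⟨by linarith, by linarith, herr⟩

/-- Resonance estimate: if `ξ₁+⋯+ξ_{k+1} = 0`, `|ξ_i| ∼ N_i` with `N₁ ≥ N₂ ≥ N₃ ≥ N₄ =
max{N₄,…,N_{k+1}}` and `N₃ ≥ 2⁹ k³ N₄`, then `Ω_k = ξ₁³+⋯+ξ_{k+1}³` satisfies
`|Ω_k| ∼ N₁N₂N₃` and `Ω_k = 3ξ₁ξ₂ξ₃ + O(N₁² N₄)`. (Indices are 0-based here.) -/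
theorem resonance_estimate (k : ℕ) (hk : 3 ≤ k) :
    ∃ c > 0, ∃ C > 0, ∀ ξ N : Fin (k + 1) → ℝ,
      (∑ i, ξ i) = 0 →
      (∀ i, N i / 2 ≤ |ξ i| ∧ |ξ i| ≤ 2 * N i) →
      N 1 ≤ N 0 → N 2 ≤ N 1 → N 3 ≤ N 2 →
      (∀ i : Fin (k + 1), 3 ≤ (i : ℕ) → N i ≤ N 3) →
      2 ^ 9 * (k : ℝ) ^ 3 * N 3 ≤ N 2 →
      (c * (N 0 * N 1 * N 2) ≤ |∑ i, ξ i ^ 3| ∧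
       |∑ i, ξ i ^ 3| ≤ C * (N 0 * N 1 * N 2) ∧
       |(∑ i, ξ i ^ 3) - 3 * (ξ 0 * ξ 1 * ξ 2)| ≤ C * N 0 ^ 2 * N 3) := by
  obtain ⟨n, rfl⟩ : ∃ n, k = n + 2 := ⟨k - 2, by omega⟩
  refine ⟨1 / 8, by norm_num, 56 * (n + 2 : ℕ), by positivity, ?_⟩
  intro ξ N hsum hN h₁₀ h₂₁ h₃₂ htail hgap
  have hN₃ : 0 ≤ N 3 := by linarith [hN 3, abs_nonneg (ξ 3)]
  have hξtail (i : Fin n) : |ξ (i.addNat 3)| ≤ 2 * N 3 :=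
    (hN _).2.trans (by linarith [htail (i.addNat 3) (by simp)])
  have hcard : (Fintype.card (Fin n) : ℝ) ≤ (n + 2 : ℕ) := by simp
  rw [Fin.sum_univ_eq_add_add_add_sum] at hsum ⊢
  refine resonance_bounds_of_three_dominant (by exact_mod_cast hk) hsum (hN 0) (hN 1) (hN 2)
    h₁₀ h₂₁ h₃₂ hN₃ ?_ ?_ hgap
  · refine (abs_sum_le_card_mul hξtail).trans ?_
    nlinarith
  · refine (abs_sum_le_card_mul (M := (2 * N 3) ^ 3) fun i => ?_).trans ?_
    · rw [abs_pow]; gcongr; exact hξtail i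
    · nlinarith [pow_nonneg hN₃ 3]
end

section
/- Let f: ℝ → ℝ be C² with |f''| ≤ K and let F be a primitive of f. Then for all u ∈ H¹(ℝ) and Ψ ∈ L^∞(ℝ): the function x ↦ F(u(x)+Ψ(x)) − F(Ψ(x)) − u(x) f(Ψ(x)) is integrable, and |∫_ℝ (F(u+Ψ) − F(Ψ) − u f(Ψ)) dx| ≤ C(‖Ψ‖_{L^∞}, K)(‖u‖²_{L²} + ‖u‖³_{L³}) for some constant C depending only on ‖Ψ‖_{L^∞} and K; in particular the modified energy 𝓔(u) = (1/2)∫ u_x² − ∫ (F(u+Ψ) − F(Ψ) − u f(Ψ)) is well-defined and finite on H¹(ℝ). -/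
/-!
The integrand is the first-order Taylor remainder of `F` at `Ψ x` with increment `u x`. Since
`|f''| ≤ K`, `f'` grows at most linearly, and two mean value estimates bound the remainder by
`(|f'(0)| + K ‖Ψ‖_∞) u² + K |u|³`. The cubic term is integrable because `H¹(ℝ)` functions are
bounded: `u²` and its derivative `2 u u'` are integrable, so `u²` vanishes at `+∞` and
`u(x)² = -∫_x^∞ 2 u u' ≤ ∫ |2 u u'|`.
-/

open MeasureTheory Set Filter Topology

theorem abs_deriv_le_of_abs_iteratedDeriv_two_le {f : ℝ → ℝ} {K : ℝ} (hf : ContDiff ℝ 2 f)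
    (hK : ∀ x, |iteratedDeriv 2 f x| ≤ K) (x : ℝ) :
    |deriv f x| ≤ |deriv f 0| + K * |x| := by
  have hdiff : Differentiable ℝ (iteratedDeriv 1 f) :=
    hf.differentiable_iteratedDeriv 1 (by norm_num)
  have hlip : |iteratedDeriv 1 f x - iteratedDeriv 1 f 0| ≤ K * |x - 0| :=
    convex_univ.norm_image_sub_le_of_norm_deriv_le (fun t _ => hdiff t)
      (fun t _ => by rw [← iteratedDeriv_succ]; exact hK t) (mem_univ 0) (mem_univ x)
  rw [iteratedDeriv_one, sub_zero] at hlip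
  linarith [abs_sub_abs_le_abs_sub (deriv f x) (deriv f 0)]

theorem abs_sub_sub_mul_le_of_hasDerivAt {F f : ℝ → ℝ} {L : ℝ} (hF : ∀ x, HasDerivAt F (f x) x)
    {a b : ℝ} (hf : ∀ t ∈ uIcc b (a + b), |f t - f b| ≤ L) :
    |F (a + b) - F b - a * f b| ≤ L * |a| := by
  have hderiv : ∀ t, HasDerivAt (fun t => F t - t * f b) (f t - f b) t := fun t =>
    ((hF t).fun_sub ((hasDerivAt_id' t).mul_const (f b))).congr_deriv (by rw [one_mul])
  have hmvt := (convex_uIcc b (a + b)).norm_image_sub_le_of_norm_hasDerivWithin_le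
    (fun t _ => (hderiv t).hasDerivWithinAt) hf left_mem_uIcc right_mem_uIcc
  rw [Real.norm_eq_abs, Real.norm_eq_abs, add_sub_cancel_right] at hmvt
  convert hmvt using 2
  ring

theorem abs_primitive_sub_taylor_le {f F : ℝ → ℝ} {K M : ℝ} (hf : ContDiff ℝ 2 f)
    (hK : ∀ x, |iteratedDeriv 2 f x| ≤ K) (hF : ∀ x, HasDerivAt F (f x) x)
    {a b : ℝ} (hb : |b| ≤ M) :
    |F (a + b) - F b - a * f b| ≤ (|deriv f 0| + K * M) * a ^ 2 + K * |a| ^ 3 := by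
  have hK0 : 0 ≤ K := (abs_nonneg _).trans (hK 0)
  set D := |deriv f 0| + K * (M + |a|)
  have hD : 0 ≤ D := by have := (abs_nonneg b).trans hb; positivity
  have hseg : ∀ t ∈ uIcc b (a + b), |t - b| ≤ |a| := fun t ht => by
    simpa using abs_sub_left_of_mem_uIcc ht
  have hderiv : ∀ t ∈ uIcc b (a + b), |deriv f t| ≤ D := fun t ht => by
    have ht : |t| ≤ M + |a| := by linarith [abs_sub_abs_le_abs_sub t b, hseg t ht]
    have := abs_deriv_le_of_abs_iteratedDeriv_two_le hf hK t
    have := mul_le_mul_of_nonneg_left ht hK0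
    linarith
  have hosc : ∀ t ∈ uIcc b (a + b), |f t - f b| ≤ D * |a| := fun t ht => by
    have hmvt := (convex_uIcc b (a + b)).norm_image_sub_le_of_norm_deriv_le
      (fun s _ => (hf.differentiable (by norm_num) s)) hderiv left_mem_uIcc ht
    exact hmvt.trans (mul_le_mul_of_nonneg_left (hseg t ht) hD)
  calc |F (a + b) - F b - a * f b| ≤ D * |a| * |a| := abs_sub_sub_mul_le_of_hasDerivAt hF hosc
    _ = (|deriv f 0| + K * M) * a ^ 2 + K * |a| ^ 3 := by
      rw [← sq_abs a]; ring

theorem abs_le_integral_abs_deriv {g g' : ℝ → ℝ} (hg : ∀ x, HasDerivAt g (g' x) x)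
    (hg_int : Integrable g) (hg'_int : Integrable g') (x : ℝ) :
    |g x| ≤ ∫ t, |g' t| := by
  have hlim : Tendsto g atTop (𝓝 0) :=
    tendsto_zero_of_hasDerivAt_of_integrableOn_Ioi (a := x) (fun t _ => hg t)
      hg'_int.integrableOn hg_int.integrableOn
  have hftc : ∫ t in Ioi x, g' t = -g x := by
    rw [integral_Ioi_of_hasDerivAt_of_tendsto' (fun t _ => hg t) hg'_int.integrableOn hlim,
      zero_sub]
  calc |g x| = |∫ t in Ioi x, g' t| := by rw [hftc, abs_neg]
    _ ≤ ∫ t in Ioi x, |g' t| := abs_integral_le_integral_abs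
    _ ≤ ∫ t, |g' t| := setIntegral_le_integral hg'_int.abs (ae_of_all _ fun t => abs_nonneg _)

theorem sq_le_integral_abs_mul_deriv {u : ℝ → ℝ} (hu : Differentiable ℝ u)
    (hu2 : MemLp u 2 volume) (hu'2 : MemLp (deriv u) 2 volume) (x : ℝ) :
    u x ^ 2 ≤ ∫ t, |2 * (u t * deriv u t)| := by
  have hderiv : ∀ t, HasDerivAt (fun t => u t ^ 2) (2 * (u t * deriv u t)) t := fun t =>
    ((hu t).hasDerivAt.fun_pow 2).congr_deriv (by ring)
  have hint : Integrable fun t => 2 * (u t * deriv u t) :=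
    (hu2.integrable_mul hu'2).const_mul 2
  simpa using abs_le_integral_abs_deriv hderiv hu2.integrable_sq hint x

theorem integrable_abs_pow_three_of_bounded {α : Type*} [MeasurableSpace α] {μ : Measure α}
    {u : α → ℝ} {B : ℝ} (hu : AEStronglyMeasurable u μ) (hu2 : Integrable (fun x => u x ^ 2) μ)
    (hB : ∀ x, |u x| ≤ B) : Integrable (fun x => |u x| ^ 3) μ := by
  refine (hu2.const_mul B).mono' (hu.norm.pow 3) (ae_of_all _ fun x => ?_)
  rw [Real.norm_eq_abs, abs_of_nonneg (pow_nonneg (abs_nonneg _) 3),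
    show |u x| ^ 3 = |u x| * u x ^ 2 by rw [← sq_abs]; ring]
  exact mul_le_mul_of_nonneg_right (hB x) (sq_nonneg _)

theorem integrable_and_abs_integral_le_of_abs_le {α : Type*} [MeasurableSpace α]
    {μ : Measure α} {G g₁ g₂ : α → ℝ} {c₁ c₂ : ℝ} (hG : AEStronglyMeasurable G μ)
    (hg₁ : Integrable g₁ μ) (hg₂ : Integrable g₂ μ) (hle : ∀ x, |G x| ≤ c₁ * g₁ x + c₂ * g₂ x) :
    Integrable G μ ∧ |∫ x, G x ∂μ| ≤ (c₁ * ∫ x, g₁ x ∂μ) + c₂ * ∫ x, g₂ x ∂μ := by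
  have hdom : Integrable (fun x => c₁ * g₁ x + c₂ * g₂ x) μ :=
    (hg₁.const_mul c₁).add (hg₂.const_mul c₂)
  have hint : Integrable G μ := hdom.mono' hG (ae_of_all _ hle)
  refine ⟨hint, ?_⟩
  calc |∫ x, G x ∂μ| ≤ ∫ x, (c₁ * g₁ x + c₂ * g₂ x) ∂μ :=
        abs_integral_le_integral_abs.trans (integral_mono hint.abs hdom hle)
    _ = (c₁ * ∫ x, g₁ x ∂μ) + c₂ * ∫ x, g₂ x ∂μ := by
        rw [integral_add (hg₁.const_mul c₁) (hg₂.const_mul c₂), integral_const_mul,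
          integral_const_mul]

/-- Well-definedness of the modified energy: if `|f''| ≤ K` and `F' = f`, then for
`u ∈ H¹(ℝ)` and `Ψ ∈ L^∞` with `‖Ψ‖_{L^∞} ≤ MΨ`, the function
`F(u+Ψ) − F(Ψ) − u f(Ψ)` is integrable with
`|∫ (F(u+Ψ) − F(Ψ) − u f(Ψ))| ≤ C(MΨ, K)(‖u‖²_{L²} + ‖u‖³_{L³})`. -/
theorem modified_energy_finite (f F : ℝ → ℝ) (K : ℝ) (hf : ContDiff ℝ 2 f)
    (hK : ∀ x, |iteratedDeriv 2 f x| ≤ K)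
    (hF : ∀ x, HasDerivAt F (f x) x) (MΨ : ℝ) :
    ∃ C > 0, ∀ u Ψ : ℝ → ℝ,
      Differentiable ℝ u → MemLp u 2 volume → MemLp (deriv u) 2 volume →
      Measurable Ψ → (∀ x, |Ψ x| ≤ MΨ) →
      Integrable (fun x => F (u x + Ψ x) - F (Ψ x) - u x * f (Ψ x)) ∧
      |∫ x : ℝ, (F (u x + Ψ x) - F (Ψ x) - u x * f (Ψ x))| ≤
        C * ((∫ x : ℝ, u x ^ 2) + ∫ x : ℝ, |u x| ^ 3) := by
  have hK0 : 0 ≤ K := (abs_nonneg _).trans (hK 0)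
  set c := |deriv f 0| + K * |MΨ|
  have hc : 0 ≤ c := by positivity
  refine ⟨c + K + 1, by positivity, fun u Ψ hu hu2 hu'2 hΨ hΨM => ?_⟩
  have hpt : ∀ x, |F (u x + Ψ x) - F (Ψ x) - u x * f (Ψ x)| ≤ c * u x ^ 2 + K * |u x| ^ 3 :=
    fun x => abs_primitive_sub_taylor_le hf hK hF ((hΨM x).trans (le_abs_self MΨ))
  have hsq : Integrable fun x => u x ^ 2 := hu2.integrable_sq
  have hcube : Integrable fun x => |u x| ^ 3 :=
    integrable_abs_pow_three_of_bounded hu.continuous.aestronglyMeasurable hsq fun x =>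
      Real.abs_le_sqrt (sq_le_integral_abs_mul_deriv hu hu2 hu'2 x)
  have hmeas : Measurable fun x => F (u x + Ψ x) - F (Ψ x) - u x * f (Ψ x) := by
    have hFm := (continuous_iff_continuousAt.2 fun x => (hF x).continuousAt).measurable
    have hfm := hf.continuous.measurable
    have hum := hu.continuous.measurable
    fun_prop
  obtain ⟨hint, hbound⟩ :=
    integrable_and_abs_integral_le_of_abs_le hmeas.aestronglyMeasurable hsq hcube hpt
  have hI2 : 0 ≤ ∫ x, u x ^ 2 := integral_nonneg fun x => sq_nonneg _
  have hI3 : 0 ≤ ∫ x, |u x| ^ 3 := integral_nonneg fun x => by positivity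
  exact ⟨hint, hbound.trans (by nlinarith [mul_nonneg hK0 hI2, mul_nonneg hc hI3])⟩
end
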